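/- Let f : [0,1] → [0,1] be continuous and let M be a transitive cycle of intervals for f. If sα(x) contains infinitely many points of M, then x ∈ M and sα(x) ⊇ M. -/

import Mathlib

open Filter Topology Set

/-- A backward orbit branch of `x`: `u 0 = x` and `f (u (n+1)) = u n`. -/
def IsBackwardBranch {X : Type*} (f : X → X) (x : X) (u : ℕ → X) : Prop :=
  u 0 = x ∧ ∀ n, f (u (n + 1)) = u n

/-- The special α-limit set of `x`: accumulation points of backward orbit branches. -/
def sAlpha {X : Type*} [TopologicalSpace X] (f : X → X) (x : X) : Set X :=
  {y | ∃ u : ℕ → X, IsBackwardBranch f x u ∧ MapClusterPt y atTop u}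

/-- The α-limit set of `x`: accumulation points of preimage sequences. -/
def alphaLimit {X : Type*} [TopologicalSpace X] (f : X → X) (x : X) : Set X :=
  {y | ∃ u : ℕ → X, (∀ n, f^[n] (u n) = x) ∧ MapClusterPt y atTop u}

/-- A cycle of intervals of period `k` for an interval map `f`. -/
def IsIntervalCycle (f : unitInterval → unitInterval) (M : Set unitInterval) (k : ℕ) : Prop :=
  1 ≤ k ∧ ∃ K : Set unitInterval,
    (∃ a b : unitInterval, a < b ∧ K = Set.Icc a b) ∧
    (∀ i j, i < k → j < k → i ≠ j → Disjoint (f^[i] '' K) (f^[j] '' K)) ∧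
    f^[k] '' K = K ∧
    M = ⋃ i ∈ Finset.range k, f^[i] '' K

/-- Topological transitivity of `f` restricted to an invariant set `M`. -/
def TransitiveOn {X : Type*} [TopologicalSpace X] (f : X → X) (M : Set X) : Prop :=
  Set.MapsTo f M M ∧
    ∀ U V : Set X, IsOpen U → IsOpen V → (U ∩ M).Nonempty → (V ∩ M).Nonempty →
      ∃ n : ℕ, (f^[n] '' (U ∩ M) ∩ V).Nonempty

/-- A transitive cycle of intervals. -/
def IsTransitiveCycle (f : unitInterval → unitInterval) (M : Set unitInterval) (k : ℕ) : Prop :=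
  IsIntervalCycle f M k ∧ TransitiveOn f M

/-!
Since `M` is a finite union of nondegenerate intervals, all but finitely many of the infinitely
many points of `sα(x) ∩ M` lie in the interior of `M`, and each of those is a limit of preimages
of `x` in `M`; so `x` has infinitely many preimages in `M`, and `x ∈ M` by invariance.

Transitivity makes periodic points dense in `M`. If `p < q` are periodic with a common period
`T`, then `[p, q] ⊆ f^T [p, q]`, so the forward images of `[p, q]` are covered by `T` increasing
unions of intervals, and they are dense in `M`. Hence, for every open `V ⊆ M`, each non-periodic
point of `M` outside a finite set has infinitely many preimages in `V`. Going through a countable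
family of such `V` that shrinks to every point of `M`, and pulling back one step at a time while
avoiding the finitely many bad points of the next step, produces a single backward branch of `x`
that visits every `V` infinitely often, so that every point of `M` is one of its accumulation
points.
-/

open Function

section Dynamics

variable {X : Type*} {f : X → X} {x : X}

theorem IsBackwardBranch.iterate_apply {u : ℕ → X} (hu : IsBackwardBranch f x u) (n : ℕ) :
    f^[n] (u n) = x := by
  induction n with
  | zero => exact hu.1
  | succ n ih => rw [iterate_succ_apply, hu.2, ih]

theorem exists_backwardBranch_of_chain {P : ℕ → X} {S : ℕ → ℕ} (hS : StrictMono S)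
    (h0 : f^[S 0] (P 0) = x) (hstep : ∀ t, f^[S (t + 1) - S t] (P (t + 1)) = P t) :
    ∃ u, IsBackwardBranch f x u ∧ ∀ t, u (S t) = P t := by
  have hchain : ∀ t t', t ≤ t' → f^[S t' - S t] (P t') = P t := by
    intro t t' htt'
    induction t', htt' using Nat.le_induction with
    | base => simp
    | succ t' htt' ih =>
      have hlt := hS (show t' < t' + 1 by omega)
      have hle := hS.monotone htt'
      rw [show S (t' + 1) - S t = (S t' - S t) + (S (t' + 1) - S t') by omega,
        iterate_add_apply, hstep, ih]
  refine ⟨fun n => f^[S n - n] (P n), ⟨by simpa using h0, fun n => ?_⟩,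
    fun t => hchain t (S t) (hS.id_le t)⟩
  have h1 : n + 1 ≤ S (n + 1) := hS.id_le _
  have h2 : n ≤ S n := hS.id_le n
  have hlt := hS (show n < n + 1 by omega)
  simp only
  rw [← iterate_succ_apply' f, ← hchain n (n + 1) n.le_succ, ← iterate_add_apply]
  congr 1
  omega

theorem finite_preimages_inter_periodicPts :
    {y | (∃ n, f^[n] y = x) ∧ y ∈ periodicPts f}.Finite := by
  refine ((finite_Iio (minimalPeriod f x)).image (fun m => f^[m] x)).subset ?_
  rintro y ⟨⟨n, rfl⟩, hy⟩
  obtain ⟨p, hp, hpy⟩ := hy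
  have hyx : y = f^[p * n - n] (f^[n] y) := by
    rw [← iterate_add_apply, Nat.sub_add_cancel (Nat.le_mul_of_pos_left n hp)]
    exact ((hpy.mul_const n).eq).symm
  have hper : 0 < minimalPeriod f (f^[n] y) :=
    minimalPeriod_pos_of_mem_periodicPts (mk_mem_periodicPts hp (hpy.apply_iterate n))
  exact ⟨(p * n - n) % minimalPeriod f (f^[n] y), Nat.mod_lt _ hper,
    by simp only; rw [iterate_mod_minimalPeriod_eq, ← hyx]⟩

theorem infinite_preimages_of_infinite_setOf_mem_image {S : Set X} {w : X}
    (hw : w ∉ periodicPts f) (h : {n | w ∈ f^[n] '' S}.Infinite) :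
    {y | y ∈ S ∧ ∃ n, 0 < n ∧ f^[n] y = w}.Infinite := by
  have : Nonempty X := ⟨w⟩
  choose! y hyS hyw using fun n (hn : n ∈ {n | w ∈ f^[n] '' S}) => hn
  have hinj : ∀ {n m}, n ∈ {n | w ∈ f^[n] '' S} → m ∈ {n | w ∈ f^[n] '' S} → n < m →
      y n ≠ y m := by
    intro n m hn hm hnm hy
    refine hw (mk_mem_periodicPts (Nat.sub_pos_of_lt hnm) ?_)
    calc f^[m - n] w = f^[m - n + n] (y n) := by rw [iterate_add_apply, hyw n hn]
      _ = w := by rw [Nat.sub_add_cancel hnm.le, hy, hyw m hm]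
  refine infinite_of_injOn_mapsTo (f := y) (s := {n | w ∈ f^[n] '' S} \ {0})
    (fun n hn m hm hnm => ?_) (fun n hn => ⟨hyS n hn.1, n, Nat.pos_of_ne_zero hn.2, hyw n hn.1⟩)
    (h.sdiff (finite_singleton 0))
  rcases lt_trichotomy n m with hlt | heq | hgt
  · exact absurd hnm (hinj hn.1 hm.1 hlt)
  · exact heq
  · exact absurd hnm.symm (hinj hm.1 hn.1 hgt)

theorem exists_backwardBranch_of_stages {G : ℕ → X → Prop} (h₀ : ∃ y n, f^[n] y = x ∧ G 0 y)
    (hstep : ∀ t y, G t y → ∃ y' n, 0 < n ∧ f^[n] y' = y ∧ G (t + 1) y') :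
    ∃ u S, IsBackwardBranch f x u ∧ StrictMono S ∧ ∀ t, G t (u (S t)) := by
  classical
  obtain ⟨y₀, n₀, hy₀, hG₀⟩ := h₀
  have hstep' : ∀ t y, ∃ y' n, G t y → 0 < n ∧ f^[n] y' = y ∧ G (t + 1) y' := fun t y =>
    if hy : G t y then
      let ⟨y', n, h⟩ := hstep t y hy
      ⟨y', n, fun _ => h⟩
    else ⟨y, 0, (absurd · hy)⟩
  choose next d hnext using hstep'
  let P : ℕ → X := fun t => Nat.rec y₀ (fun t y => next t y) t
  let S : ℕ → ℕ := fun t => Nat.rec n₀ (fun t s => s + d t (P t)) t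
  have hP : ∀ t, G t (P t) := fun t => Nat.rec hG₀ (fun t ih => (hnext t _ ih).2.2) t
  have hS : StrictMono S := strictMono_nat_of_lt_succ fun t => by
    simpa [S] using (hnext t _ (hP t)).1
  obtain ⟨u, hu, huS⟩ := exists_backwardBranch_of_chain (P := P) hS hy₀ fun t => by
    simpa [S, P] using (hnext t _ (hP t)).2.1
  exact ⟨u, S, hu, hS, fun t => huS t ▸ hP t⟩

theorem exists_backwardBranch_frequently_mem {M : Set X} {U B : ℕ → Set X}
    (hUM : ∀ j, U j ⊆ M) (hB : ∀ j, (B j).Finite)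
    (hpre : ∀ j, ∀ w ∈ M, w ∉ B j → w ∉ periodicPts f →
      {y | y ∈ U j ∧ ∃ n, 0 < n ∧ f^[n] y = w}.Infinite)
    (hx : {w | w ∈ M ∧ ∃ n, f^[n] w = x}.Infinite) :
    ∃ u, IsBackwardBranch f x u ∧ ∀ j, ∃ᶠ n in atTop, u n ∈ U j := by
  -- stage `t ≠ 0` lands in `U (Nat.unpair t).1`, so every `U j` is visited infinitely often
  let G : ℕ → X → Prop := fun t y => y ∈ M ∧ y ∉ B (Nat.unpair (t + 1)).1 ∧
    y ∉ periodicPts f ∧ (t ≠ 0 → y ∈ U (Nat.unpair t).1)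
  have h₀ : ∃ y n, f^[n] y = x ∧ G 0 y := by
    obtain ⟨p₀, ⟨hp₀M, n₀, hp₀⟩, hp₀bad⟩ :=
      (hx.sdiff (finite_preimages_inter_periodicPts.union (hB (Nat.unpair 1).1))).nonempty
    simp only [mem_union, not_or] at hp₀bad
    exact ⟨p₀, n₀, hp₀, hp₀M, hp₀bad.2, fun h => hp₀bad.1 ⟨⟨n₀, hp₀⟩, h⟩, fun h => absurd rfl h⟩
  have hstep : ∀ t y, G t y → ∃ y' n, 0 < n ∧ f^[n] y' = y ∧ G (t + 1) y' := by
    rintro t y ⟨hyM, hyB, hyper, -⟩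
    obtain ⟨y', ⟨hy'U, n, hn, hy'⟩, hy'B⟩ :=
      ((hpre _ y hyM hyB hyper).sdiff (hB (Nat.unpair (t + 1 + 1)).1)).nonempty
    exact ⟨y', n, hn, hy', hUM _ hy'U, hy'B,
      fun h => hyper (hy' ▸ (Commute.iterate_self f n).mapsTo_periodicPts h), fun _ => hy'U⟩
  obtain ⟨u, S, hu, hS, hG⟩ := exists_backwardBranch_of_stages h₀ hstep
  refine ⟨u, hu, fun j => frequently_atTop.2 fun a => ⟨S (Nat.pair j (a + 1)), ?_, ?_⟩⟩
  · exact (Nat.right_le_pair j (a + 1)).trans' (Nat.le_succ a) |>.trans (hS.id_le _)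
  · simpa using (hG (Nat.pair j (a + 1))).2.2.2
      ((Nat.succ_pos a).trans_le (Nat.right_le_pair j (a + 1))).ne'

end Dynamics

section Topological

variable {X : Type*} [TopologicalSpace X] {f : X → X} {x : X}

theorem sAlpha_inter_subset_closure {U : Set X} (hU : IsOpen U) :
    sAlpha f x ∩ U ⊆ closure {w | w ∈ U ∧ ∃ n, f^[n] w = x} := by
  rintro y ⟨⟨u, hu, hy⟩, hyU⟩
  rw [mem_closure_iff_nhds]
  intro N hN
  obtain ⟨n, hnN, hnU⟩ :=
    ((mapClusterPt_iff_frequently.1 hy) _ (inter_mem hN (hU.mem_nhds hyU))).exists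
  exact ⟨u n, hnN, hnU, n, hu.iterate_apply n⟩

theorem infinite_preimages_of_infinite_sAlpha_inter [T1Space X] {M : Set X}
    (hM : (M \ interior M).Finite) (h : (sAlpha f x ∩ M).Infinite) :
    {w | w ∈ M ∧ ∃ n, f^[n] w = x}.Infinite := by
  intro hfin
  have hint : {w | w ∈ interior M ∧ ∃ n, f^[n] w = x}.Finite :=
    hfin.subset fun w hw => ⟨interior_subset hw.1, hw.2⟩
  refine h ((hint.union hM).subset fun y hy => ?_)
  by_cases hyM : y ∈ interior M
  · left
    simpa [hint.isClosed.closure_eq] using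
      sAlpha_inter_subset_closure isOpen_interior ⟨hy.1, hyM⟩
  · exact Or.inr ⟨hy.2, hyM⟩

theorem mem_sAlpha_of_frequently {u : ℕ → X} {z : X} (hu : IsBackwardBranch f x u)
    (h : ∀ N ∈ 𝓝 z, ∃ᶠ n in atTop, u n ∈ N) : z ∈ sAlpha f x :=
  ⟨u, hu, mapClusterPt_iff_frequently.2 h⟩

theorem exists_seq_open_subset_forall_mem_nhds [SecondCountableTopology X] {M : Set X}
    (hM : M ⊆ closure (interior M)) (hne : M.Nonempty) :
    ∃ U : ℕ → Set X, (∀ j, IsOpen (U j) ∧ (U j).Nonempty ∧ U j ⊆ M) ∧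
      ∀ z ∈ M, ∀ N ∈ 𝓝 z, ∃ j, U j ⊆ N := by
  obtain ⟨b, hbc, hb0, hb⟩ := TopologicalSpace.exists_countable_basis X
  have hsmall : ∀ z ∈ M, ∀ N ∈ 𝓝 z, ∃ V ∈ {V ∈ b | V ⊆ M}, V ⊆ N := by
    intro z hz N hN
    obtain ⟨y, hyN, hyM⟩ :=
      mem_closure_iff_nhds.1 (hM hz) (interior N) (interior_mem_nhds.2 hN)
    obtain ⟨V, hVb, hyV, hV⟩ :=
      hb.exists_subset_of_mem_open (u := interior N ∩ interior M) ⟨hyN, hyM⟩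
        (isOpen_interior.inter isOpen_interior)
    exact ⟨V, ⟨hVb, hV.trans (inter_subset_right.trans interior_subset)⟩,
      hV.trans (inter_subset_left.trans interior_subset)⟩
  obtain ⟨z, hz⟩ := hne
  obtain ⟨V, hV, -⟩ := hsmall z hz univ univ_mem
  obtain ⟨U, hU⟩ := (hbc.mono (sep_subset b _)).exists_eq_range ⟨V, hV⟩
  refine ⟨U, fun j => ?_, fun z hz N hN => ?_⟩
  · obtain ⟨hUb, hUM⟩ : U j ∈ {V ∈ b | V ⊆ M} := hU ▸ mem_range_self j
    exact ⟨hb.isOpen hUb, nonempty_iff_ne_empty.2 fun h => hb0 (h ▸ hUb), hUM⟩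
  · obtain ⟨V, hV, hVN⟩ := hsmall z hz N hN
    obtain ⟨j, rfl⟩ := hU ▸ hV
    exact ⟨j, hVN⟩

theorem TransitiveOn.subset_closure_iUnion_image {M U : Set X} (htr : TransitiveOn f M)
    (hU : IsOpen U) (hUM : (U ∩ M).Nonempty) :
    M ⊆ closure (⋃ n, f^[n] '' (U ∩ M)) := fun z hz =>
  mem_closure_iff.2 fun O hO hzO =>
    let ⟨n, y, hyU, hyO⟩ := htr.2 U O hU hO hUM ⟨z, hzO, hz⟩
    ⟨y, hyO, mem_iUnion.2 ⟨n, hyU⟩⟩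

end Topological

section OrderTopology

variable {X : Type*} [LinearOrder X] [TopologicalSpace X] [OrderTopology X]

/-- A point of `closure s \ s` bounds `s` on one side, so it is the supremum or the infimum of
`s`. -/
theorem IsPreconnected.finite_closure_diff {s : Set X} (hs : IsPreconnected s) :
    (closure s \ s).Finite := by
  refine (Set.Subsingleton.finite (s := {a | IsLUB s a}) (fun a ha b hb => ha.unique hb) |>.union
    (Set.Subsingleton.finite (s := {a | IsGLB s a}) fun a ha b hb => ha.unique hb)).subset ?_
  rintro a ⟨hcl, has⟩
  by_cases hub : a ∈ upperBounds s
  · exact Or.inl (isLUB_of_mem_closure hub hcl)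
  · refine Or.inr (isGLB_of_mem_closure (fun b hb => not_lt.1 fun hba => ?_) hcl)
    obtain ⟨c, hc, hac⟩ := not_forall₂.1 hub
    exact has (hs.Icc_subset hb hc ⟨hba.le, (not_le.1 hac).le⟩)

/-- The forward images of `H` are covered by the `T` sets `⋃ m, f^[i + m * T] '' H`, which are
increasing unions of preconnected sets; `F` collects the points of their closures that they miss. -/
theorem exists_finite_forall_infinite_setOf_mem_image_iterate {f : X → X} (hf : Continuous f)
    {H : Set X} (hH : IsPreconnected H) {T : ℕ} (hT : 0 < T) (hHT : H ⊆ f^[T] '' H) :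
    ∃ F : Set X, F.Finite ∧
      ∀ w ∈ closure (⋃ n, f^[n] '' H), w ∉ F → {n | w ∈ f^[n] '' H}.Infinite := by
  have hmono : ∀ i, Monotone fun m => f^[i + m * T] '' H := fun i =>
    monotone_nat_of_le_succ fun m => by
      calc f^[i + m * T] '' H ⊆ f^[i + m * T] '' (f^[T] '' H) := image_mono hHT
        _ = f^[i + (m + 1) * T] '' H := by
          rw [← image_comp, ← iterate_add, show i + m * T + T = i + (m + 1) * T by ring]
  set A : ℕ → Set X := fun i => ⋃ m, f^[i + m * T] '' H
  have hA : ∀ i, IsPreconnected (A i) := fun i => by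
    simpa only [sUnion_range] using IsPreconnected.sUnion_directed
      (directedOn_range.2 (hmono i).directed_le)
      (forall_mem_range.2 fun m => hH.image _ (hf.iterate _).continuousOn)
  have hunion : ⋃ n, f^[n] '' H = ⋃ i ∈ Iio T, A i := by
    refine subset_antisymm (iUnion_subset fun n => ?_) (iUnion₂_subset fun i _ =>
      iUnion_subset fun m => subset_iUnion (fun n => f^[n] '' H) _)
    rw [← Nat.mod_add_div' n T]
    exact (subset_iUnion (fun m => f^[n % T + m * T] '' H) _).trans
      (subset_biUnion_of_mem (u := A) (Nat.mod_lt n hT))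
  refine ⟨⋃ i ∈ Iio T, closure (A i) \ A i,
    (finite_Iio T).biUnion fun i _ => (hA i).finite_closure_diff, fun w hw hwF => ?_⟩
  rw [hunion, (finite_Iio T).closure_biUnion, mem_iUnion₂] at hw
  obtain ⟨i, hi, hwi⟩ := hw
  obtain ⟨m₀, hm₀⟩ := mem_iUnion.1 (not_not.1 fun h => hwF (mem_biUnion hi ⟨hwi, h⟩))
  refine infinite_of_forall_exists_gt fun a => ⟨i + (m₀ + a + 1) * T,
    hmono i (by omega) hm₀, ?_⟩
  nlinarith

theorem finite_biUnion_Icc_diff_interior {ι : Type*} {s : Finset ι} (c d : ι → X) :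
    ((⋃ i ∈ s, Icc (c i) (d i)) \ interior (⋃ i ∈ s, Icc (c i) (d i))).Finite := by
  refine (s.finite_toSet.biUnion fun i _ => (finite_singleton (d i)).insert (c i)).subset ?_
  rintro w ⟨hw, hwint⟩
  obtain ⟨i, hi, hwi⟩ := mem_iUnion₂.1 hw
  refine mem_iUnion₂.2 ⟨i, hi, not_not.1 fun hne => hwint ?_⟩
  simp only [mem_insert_iff, mem_singleton_iff, not_or] at hne
  exact interior_maximal (Ioo_subset_Icc_self.trans
    (Finset.subset_set_biUnion_of_mem (f := fun i => Icc (c i) (d i)) hi)) isOpen_Ioo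
    (show w ∈ Ioo (c i) (d i) from
      ⟨lt_of_le_of_ne hwi.1 (Ne.symm hne.1), lt_of_le_of_ne hwi.2 hne.2⟩)

theorem biUnion_Icc_subset_closure_interior [DenselyOrdered X] {ι : Type*} {s : Finset ι}
    {c d : ι → X} (hcd : ∀ i ∈ s, c i < d i) :
    ⋃ i ∈ s, Icc (c i) (d i) ⊆ closure (interior (⋃ i ∈ s, Icc (c i) (d i))) :=
  iUnion₂_subset fun i hi => closure_Ioo (hcd i hi).ne ▸ closure_mono
    (interior_maximal (Ioo_subset_Icc_self.trans
      (Finset.subset_set_biUnion_of_mem (f := fun i => Icc (c i) (d i)) hi)) isOpen_Ioo)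

end OrderTopology

section IntervalMaps

variable {X : Type*} [ConditionallyCompleteLinearOrder X] [TopologicalSpace X] [OrderTopology X]
  [DenselyOrdered X] {f : X → X}

/-- Otherwise the intermediate value theorem gives a fixed point of `f^[k * n]` in
`[x₀, f^[n] x₀]`. -/
theorem lt_iterate_mul_of_lt_iterate (hf : Continuous f) {x₀ : X} {n : ℕ}
    (hx₀ : x₀ < f^[n] x₀) (hper : ∀ c ∈ Icc x₀ (f^[n] x₀), c ∉ periodicPts f) {k : ℕ}
    (hk : 0 < k) : x₀ < f^[k * n] x₀ := by
  have hn : 0 < n := Nat.pos_of_ne_zero fun h => by simp [h] at hx₀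
  induction k, hk using Nat.le_induction with
  | base => simpa using hx₀
  | succ k hk ih =>
    by_contra hle
    obtain ⟨c, hc, hfix⟩ := isPreconnected_Icc.intermediate_value₂
      (left_mem_Icc.2 hx₀.le) (right_mem_Icc.2 hx₀.le)
      continuous_id.continuousOn (hf.iterate (k * n)).continuousOn ih.le
      (show f^[k * n] (f^[n] x₀) ≤ f^[n] x₀ by
        rw [← iterate_add_apply, ← Nat.succ_mul]
        exact (not_lt.1 hle).trans hx₀.le)
    exact hper c hc (mk_mem_periodicPts (Nat.mul_pos hk hn) hfix.symm)

theorem iterate_mul_lt_of_iterate_lt (hf : Continuous f) {x₀ : X} {n : ℕ}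
    (hx₀ : f^[n] x₀ < x₀) (hper : ∀ c ∈ Icc (f^[n] x₀) x₀, c ∉ periodicPts f) {k : ℕ}
    (hk : 0 < k) : f^[k * n] x₀ < x₀ :=
  lt_iterate_mul_of_lt_iterate (X := Xᵒᵈ) hf hx₀ (fun c hc => hper c ⟨hc.2, hc.1⟩) hk

/-- Otherwise transitivity gives a point of `Ioo l r` that one iterate moves to the right and
another to the left, both inside `Ioo l r`, contradicting `lt_iterate_mul_of_lt_iterate`. -/
theorem TransitiveOn.exists_mem_periodicPts_Ioo {M : Set X} (htr : TransitiveOn f M)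
    (hf : Continuous f) {l r : X} (hlr : l < r) (hM : Ioo l r ⊆ M) :
    ∃ p ∈ Ioo l r, p ∈ periodicPts f := by
  by_contra! hper
  obtain ⟨a₁, hla₁, ha₁r⟩ := exists_between hlr
  obtain ⟨a₂, ha₁a₂, ha₂r⟩ := exists_between ha₁r
  have hne : ∀ {s t}, l ≤ s → s < t → t ≤ r → (Ioo s t ∩ M).Nonempty := fun hs hst ht =>
    let ⟨c, hc⟩ := nonempty_Ioo.2 hst
    ⟨c, hc, hM ⟨hs.trans_lt hc.1, hc.2.trans_le ht⟩⟩
  obtain ⟨n₁, -, ⟨w, hw, rfl⟩, hwr⟩ := htr.2 _ _ isOpen_Ioo isOpen_Ioo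
    (hne hla₁.le ha₁a₂ ha₂r.le) (hne (hla₁.trans ha₁a₂).le ha₂r le_rfl)
  obtain ⟨n₂, -, ⟨x₀, ⟨⟨hx₀, hx₀r⟩, -⟩, rfl⟩, hx₀l⟩ := htr.2
    (Ioo a₁ a₂ ∩ f^[n₁] ⁻¹' Ioo a₂ r) _
    (isOpen_Ioo.inter (isOpen_Ioo.preimage (hf.iterate n₁))) isOpen_Ioo
    ⟨w, ⟨hw.1, hwr⟩, hw.2⟩ (hne le_rfl hla₁ ha₁r.le)
  have hright : x₀ < f^[n₂ * n₁] x₀ :=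
    lt_iterate_mul_of_lt_iterate hf (hx₀.2.trans hx₀r.1)
      (fun c hc => hper c ⟨hla₁.trans (hx₀.1.trans_le hc.1), hc.2.trans_lt hx₀r.2⟩)
      (Nat.pos_of_ne_zero fun h => by simp [h] at hx₀l; exact hx₀l.2.not_gt hx₀.1)
  have hleft : f^[n₁ * n₂] x₀ < x₀ :=
    iterate_mul_lt_of_iterate_lt hf (hx₀l.2.trans hx₀.1)
      (fun c hc => hper c ⟨hx₀l.1.trans_le hc.1, hc.2.trans_lt (hx₀.2.trans ha₂r)⟩)
      (Nat.pos_of_ne_zero fun h => by simp [h] at hx₀r; exact hx₀r.1.not_gt hx₀.2)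
  rw [mul_comm] at hleft
  exact hleft.not_gt hright

/-- Between two periodic points `p < q` of a common period `T` we have `[p, q] ⊆ f^[T] '' [p, q]`,
and transitivity makes the forward images of `[p, q]` dense in `M`. -/
theorem TransitiveOn.exists_finite_forall_infinite_preimages [Nontrivial X] {M V : Set X}
    (htr : TransitiveOn f M) (hf : Continuous f) (hV : IsOpen V) (hVne : V.Nonempty)
    (hVM : V ⊆ M) :
    ∃ F : Set X, F.Finite ∧ ∀ w ∈ M, w ∉ F → w ∉ periodicPts f →
      {y | y ∈ V ∧ ∃ n, 0 < n ∧ f^[n] y = w}.Infinite := by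
  obtain ⟨l, r, hlr, hlrV⟩ := hV.exists_Ioo_subset hVne
  obtain ⟨m, hlm, hmr⟩ := exists_between hlr
  obtain ⟨p, hp, hpper⟩ := htr.exists_mem_periodicPts_Ioo hf hlm
    ((Ioo_subset_Ioo_right hmr.le).trans (hlrV.trans hVM))
  obtain ⟨q, hq, hqper⟩ := htr.exists_mem_periodicPts_Ioo hf hmr
    ((Ioo_subset_Ioo_left hlm.le).trans (hlrV.trans hVM))
  have hpq : p < q := hp.2.trans hq.1
  have hHV : Icc p q ⊆ V := (Icc_subset_Ioo hp.1 hq.2).trans hlrV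
  set T := minimalPeriod f p * minimalPeriod f q
  have hT : 0 < T := Nat.mul_pos (minimalPeriod_pos_of_mem_periodicPts hpper)
    (minimalPeriod_pos_of_mem_periodicPts hqper)
  have hHT : Icc p q ⊆ f^[T] '' Icc p q :=
    (isPreconnected_Icc.image _ (hf.iterate T).continuousOn).Icc_subset
      ⟨p, left_mem_Icc.2 hpq.le, ((isPeriodicPt_minimalPeriod f p).mul_const _).eq⟩
      ⟨q, right_mem_Icc.2 hpq.le, ((isPeriodicPt_minimalPeriod f q).const_mul _).eq⟩
  obtain ⟨F, hF, hFw⟩ :=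
    exists_finite_forall_infinite_setOf_mem_image_iterate hf isPreconnected_Icc hT hHT
  obtain ⟨c, hpc, hcq⟩ := exists_between hpq
  have hMcl : M ⊆ closure (⋃ n, f^[n] '' Icc p q) :=
    (htr.subset_closure_iUnion_image isOpen_Ioo ⟨c, ⟨hpc, hcq⟩, hVM (hHV ⟨hpc.le, hcq.le⟩)⟩).trans
      (closure_mono (iUnion_mono fun n => image_mono fun y hy => Ioo_subset_Icc_self hy.1))
  exact ⟨F, hF, fun w hwM hwF hwper =>
    (infinite_preimages_of_infinite_setOf_mem_image hwper (hFw w (hMcl hwM) hwF)).mono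
      fun y hy => ⟨hHV hy.1, hy.2⟩⟩

end IntervalMaps

namespace IsIntervalCycle

variable {f : unitInterval → unitInterval} {M : Set unitInterval} {k : ℕ}

theorem exists_eq_biUnion_Icc (hf : Continuous f) (h : IsIntervalCycle f M k) :
    ∃ c d : ℕ → unitInterval, (∀ i ∈ Finset.range k, c i < d i) ∧
      M = ⋃ i ∈ Finset.range k, Icc (c i) (d i) := by
  obtain ⟨-, K, ⟨a, b, hab, rfl⟩, -, hcyc, rfl⟩ := h
  have hIcc : ∀ i, ∃ c d, (i < k → c < d) ∧ f^[i] '' Icc a b = Icc c d := fun i => by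
    have hS := eq_Icc_of_connected_compact
      ⟨(nonempty_Icc.2 hab.le).image _, isPreconnected_Icc.image _ (hf.iterate i).continuousOn⟩
      (isCompact_Icc.image (hf.iterate i))
    refine ⟨_, _, fun hi => not_le.1 fun hle => hab.ne ?_, hS⟩
    -- `f^[k - i]` maps the `i`-th interval onto `[a, b]`
    have hsub : (Icc a b).Subsingleton := by
      rw [← hcyc, show k = (k - i) + i by omega, iterate_add, image_comp, hS]
      exact (subsingleton_Icc_of_ge hle).image _
    exact hsub (left_mem_Icc.2 hab.le) (right_mem_Icc.2 hab.le)
  choose c d hcd hS using hIcc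
  exact ⟨c, d, fun i hi => hcd i (Finset.mem_range.1 hi), iUnion₂_congr fun i _ => hS i⟩

theorem finite_diff_interior (hf : Continuous f) (h : IsIntervalCycle f M k) :
    (M \ interior M).Finite := by
  obtain ⟨c, d, -, rfl⟩ := h.exists_eq_biUnion_Icc hf
  exact finite_biUnion_Icc_diff_interior c d

theorem subset_closure_interior (hf : Continuous f) (h : IsIntervalCycle f M k) :
    M ⊆ closure (interior M) := by
  obtain ⟨c, d, hcd, rfl⟩ := h.exists_eq_biUnion_Icc hf
  exact biUnion_Icc_subset_closure_interior hcd

end IsIntervalCycle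

theorem stmt13 (f : unitInterval → unitInterval) (hf : Continuous f)
    (M : Set unitInterval) (k : ℕ) (hM : IsTransitiveCycle f M k)
    (x : unitInterval) (hinf : (sAlpha f x ∩ M).Infinite) :
    x ∈ M ∧ M ⊆ sAlpha f x := by
  obtain ⟨hcyc, htr⟩ := hM
  have hpre := infinite_preimages_of_infinite_sAlpha_inter (hcyc.finite_diff_interior hf) hinf
  have hxM : x ∈ M := by
    obtain ⟨w, hwM, n, rfl⟩ := hpre.nonempty
    exact htr.1.iterate n hwM
  obtain ⟨U, hU, hUnhds⟩ :=
    exists_seq_open_subset_forall_mem_nhds (hcyc.subset_closure_interior hf) ⟨x, hxM⟩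
  choose B hB hBpre using fun j =>
    htr.exists_finite_forall_infinite_preimages hf (hU j).1 (hU j).2.1 (hU j).2.2
  obtain ⟨u, hu, hfreq⟩ := exists_backwardBranch_frequently_mem (fun j => (hU j).2.2) hB hBpre hpre
  refine ⟨hxM, fun z hz => mem_sAlpha_of_frequently hu fun N hN => ?_⟩
  obtain ⟨j, hj⟩ := hUnhds z hz N hN
  exact (hfreq j).mono fun n hn => hj hn
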